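/- For a graph Γ, the action α of the core (A⁺_Γ)_c on the quotient A⁺_Γ/∼ by the core relation, given by a·[s] = [as], is faithful if and only if Γ has no universal vertex. -/

import Mathlib

section RightLCMBasics
variable (S : Type*) [Monoid S]

/-- The principal right ideal `sS`. -/
def pIdeal {S : Type*} [Monoid S] (s : S) : Set S := Set.range (fun r => s * r)

/-- `s ⊥ t` : the principal right ideals are disjoint. -/
def Orth {S : Type*} [Monoid S] (s t : S) : Prop := pIdeal s ∩ pIdeal t = ∅

/-- Left cancellativity. -/
def LeftCancellative : Prop := ∀ a b c : S, a * b = a * c → b = c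

/-- Right LCM property: intersections of principal right ideals are empty or principal. -/
def IsRightLCM : Prop :=
  ∀ s t : S, pIdeal s ∩ pIdeal t = ∅ ∨ ∃ r : S, pIdeal s ∩ pIdeal t = pIdeal r

/-- The core subsemigroup `S_c`. -/
def core : Set S := {a | ∀ s : S, ¬ Orth a s}

/-- The core relation `s ∼ t` : `sa = tb` for some core elements `a, b`. -/
def coreRel {S : Type*} [Monoid S] (s t : S) : Prop :=
  ∃ a ∈ core S, ∃ b ∈ core S, s * a = t * b

/-- A (finite) foundation set. -/
def IsFoundationSet {S : Type*} [Monoid S] (F : Set S) : Prop :=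
  F.Finite ∧ ∀ s : S, ∃ f ∈ F, ¬ Orth f s

/-- Accuracy: distinct elements are mutually orthogonal. -/
def Accurate {S : Type*} [Monoid S] (F : Set S) : Prop :=
  ∀ f ∈ F, ∀ g ∈ F, f ≠ g → Orth f g

/-- Property (AR): every foundation set admits an accurate refinement. -/
def HasAR : Prop :=
  ∀ F : Set S, IsFoundationSet F →
    ∃ F' : Set S, IsFoundationSet F' ∧ Accurate F' ∧
      F' ⊆ {x | ∃ f ∈ F, ∃ r : S, x = f * r}

end RightLCMBasics

/-- The congruence on the free monoid on the vertices implementing the right-angled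
Artin relations. -/
def raamCon {V : Type*} (G : SimpleGraph V) : Con (FreeMonoid V) :=
  conGen (fun x y => ∃ v w : V, G.Adj v w ∧
    x = FreeMonoid.of v * FreeMonoid.of w ∧ y = FreeMonoid.of w * FreeMonoid.of v)

/-- The right-angled Artin monoid of a graph. -/
def RAAM {V : Type*} (G : SimpleGraph V) := (raamCon G).Quotient

instance {V : Type*} (G : SimpleGraph V) : Monoid (RAAM G) :=
  inferInstanceAs (Monoid (raamCon G).Quotient)

/-- The generator of `RAAM G` associated to a vertex. -/
def agen {V : Type*} (G : SimpleGraph V) (v : V) : RAAM G := (raamCon G).mk' (FreeMonoid.of v)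

/-!
A universal vertex `v` gives a central generator `a_v`; central elements lie in the core and
act on every class exactly as `1` does, so `a_v ≠ 1` breaks faithfulness. Conversely, a nonempty
word starting with `a_v` is orthogonal to `a_w` for any `w ≠ v` not adjacent to `v`, as seen by
projecting onto the free monoid on `{v, w}`; so without universal vertices the core is trivial
and the action is trivially faithful.
-/

theorem not_orth_iff {S : Type*} [Monoid S] {s t : S} : ¬ Orth s t ↔ ∃ x y, s * x = t * y := by
  simp only [Orth, pIdeal, ← Set.nonempty_iff_ne_empty, Set.Nonempty, Set.mem_inter_iff,
    Set.mem_range]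
  constructor
  · rintro ⟨_, ⟨x, rfl⟩, y, hy⟩
    exact ⟨x, y, hy.symm⟩
  · rintro ⟨x, y, h⟩
    exact ⟨s * x, ⟨x, rfl⟩, y, h.symm⟩

theorem mem_core_of_forall_commute {S : Type*} [Monoid S] {a : S} (ha : ∀ s, Commute a s) :
    a ∈ core S :=
  fun s => not_orth_iff.mpr ⟨s, a, ha s⟩

theorem coreRel_mul_one_mul {S : Type*} [Monoid S] {a : S} (ha : ∀ s, Commute a s) (s : S) :
    coreRel (a * s) (1 * s) :=
  ⟨1, mem_core_of_forall_commute Commute.one_left, a, mem_core_of_forall_commute ha,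
    by rw [mul_one, one_mul, ha s]⟩

namespace RAAM

variable {V : Type*} {G : SimpleGraph V}

theorem induction_on {P : RAAM G → Prop} (one : P 1) (agen_mul : ∀ v x, P x → P (agen G v * x))
    (x : RAAM G) : P x := by
  obtain ⟨u, rfl⟩ := Con.mk'_surjective x
  induction u using FreeMonoid.recOn with
  | one => exact one
  | of_mul v u ih => rw [map_mul]; exact agen_mul v _ ih

theorem eq_one_or_exists_eq_agen_mul (x : RAAM G) : x = 1 ∨ ∃ v y, x = agen G v * y := by
  induction x using induction_on with
  | one => exact .inl rfl
  | agen_mul v y _ => exact .inr ⟨v, y, rfl⟩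

theorem agen_commute_of_adj {v w : V} (h : G.Adj v w) : Commute (agen G v) (agen G w) :=
  (Con.eq _).mpr (ConGen.Rel.of _ _ ⟨v, w, h, rfl, rfl⟩)

theorem agen_commute_of_forall_adj {v : V} (hv : ∀ w, w ≠ v → G.Adj v w) (x : RAAM G) :
    Commute (agen G v) x := by
  induction x using induction_on with
  | one => exact Commute.one_right _
  | agen_mul w x ih =>
    rcases eq_or_ne w v with rfl | hw
    · exact (Commute.refl _).mul_right ih
    · exact (agen_commute_of_adj (hv w hw)).mul_right ih

def lift {M : Type*} [Monoid M] (f : V → M) (hf : ∀ v w, G.Adj v w → Commute (f v) (f w)) :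
    RAAM G →* M :=
  Con.lift (raamCon G) (FreeMonoid.lift f) <| Con.conGen_le.mpr <| by
    rintro _ _ ⟨v, w, h, rfl, rfl⟩
    simp only [Con.ker_rel, map_mul, FreeMonoid.lift_eval_of, (hf v w h).eq]

@[simp]
theorem lift_agen {M : Type*} [Monoid M] (f : V → M) (hf : ∀ v w, G.Adj v w → Commute (f v) (f w))
    (v : V) : lift f hf (agen G v) = f v :=
  (Con.lift_mk' _ _).trans (FreeMonoid.lift_eval_of _ _)

theorem agen_ne_one (v : V) : agen G v ≠ 1 := fun h => by
  simpa using congrArg (lift (G := G) (fun _ => Multiplicative.ofAdd (1 : ℕ))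
    (fun _ _ _ => Commute.all _ _)) h

/-- Erase every letter other than `v` and `w` and compare first letters. -/
theorem agen_mul_ne_agen_mul {v w : V} (hne : v ≠ w) (hvw : ¬ G.Adj v w) (x y : RAAM G) :
    agen G v * x ≠ agen G w * y := by
  classical
  let f : V → FreeMonoid Bool := fun u =>
    if u = v then .of false else if u = w then .of true else 1
  have hf : ∀ p q, G.Adj p q → Commute (f p) (f q) := by
    intro p q hpq
    have := hpq.ne
    simp only [f]
    split_ifs <;> simp_all [Commute.one_left, Commute.one_right, G.adj_comm]
  intro h
  have := congrArg (fun z => (lift f hf z).toList) h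
  simp [f, hne.symm] at this

theorem core_eq_one (h : ¬ ∃ v : V, ∀ w : V, w ≠ v → G.Adj v w) {a : RAAM G}
    (ha : a ∈ core (RAAM G)) : a = 1 := by
  obtain rfl | ⟨v, y, rfl⟩ := eq_one_or_exists_eq_agen_mul a
  · rfl
  push Not at h
  obtain ⟨w, hwv, hvw⟩ := h v
  obtain ⟨x, z, hxz⟩ := not_orth_iff.mp (ha (agen G w))
  rw [mul_assoc] at hxz
  exact absurd hxz (agen_mul_ne_agen_mul hwv.symm hvw _ _)

end RAAM

theorem raam_core_action_faithful_general {V : Type*} (G : SimpleGraph V) :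
    (∀ a ∈ core (RAAM G), ∀ b ∈ core (RAAM G),
        (∀ s : RAAM G, coreRel (a * s) (b * s)) → a = b) ↔
      ¬ ∃ v : V, ∀ w : V, w ≠ v → G.Adj v w := by
  constructor
  · rintro hfaithful ⟨v, hv⟩
    have hcentral := RAAM.agen_commute_of_forall_adj hv
    exact RAAM.agen_ne_one v <| hfaithful _ (mem_core_of_forall_commute hcentral) 1
      (mem_core_of_forall_commute Commute.one_left) (coreRel_mul_one_mul hcentral)
  · intro h a ha b hb _
    rw [RAAM.core_eq_one h ha, RAAM.core_eq_one h hb]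

/-- Corollary 3.4(iv): the action of the core of `A⁺_Γ` on core classes is faithful iff
`Γ` has no universal vertex. -/
theorem raam_core_action_faithful {V : Type*} [Countable V] (G : SimpleGraph V) :
    (∀ a ∈ core (RAAM G), ∀ b ∈ core (RAAM G),
        (∀ s : RAAM G, coreRel (a * s) (b * s)) → a = b) ↔
      ¬ ∃ v : V, ∀ w : V, w ≠ v → G.Adj v w :=
  raam_core_action_faithful_general G
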